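/- For integers $k \ge 3$ and $k \le n \le k(k-1)$, we have $g_k(n) = p(n,k)$, where $p(n,k)$ is the maximum product of parts over partitions of $n$ into $k$ nonnegative parts each less than $n$. -/

import Mathlib

/-- `p n k` : maximum of `∏ q i` over partitions of `n` into `k` nonnegative
parts each strictly less than `n` (so `p 0 0 = 1`). -/
noncomputable def p (n k : ℕ) : ℕ :=
  sSup {m | ∃ q : Fin k → ℕ, (∑ i, q i) = n ∧ (∀ i, q i < n) ∧ m = ∏ i, q i}

/-- The Erdős–Hajnal function `g k s`: `g k s = 0` for `s < k` and otherwise the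
maximum of `∑ i, g k (s i) + ∏ i, s i` over nontrivial partitions of `s` into `k` parts. -/
noncomputable def g (k : ℕ) (s : ℕ) : ℕ :=
  Nat.strongRecOn s fun s ih =>
    if s < k then 0
    else sSup {m | ∃ q : Fin k → ℕ, ∃ h : ∀ i, q i < s,
      (∑ i, q i) = s ∧ m = (∑ i, ih (q i) (h i)) + ∏ i, q i}

/-!
Both sides equal `balancedProd k n`, the product of the parts of an equitable partition of `n`
into `k` parts: for `p` because equitable partitions maximise the product, for `g` by strong
induction once `∑ B(qᵢ) + ∏ qᵢ ≤ B(n)` is known for `B = balancedProd k` and every partition `q`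
of `n` into parts `< n`. This inequality follows by induction on `n`, lowering a largest part
`a ≥ k` by one: with `B' = balancedProd (k - 1)`, the left side drops by
`B'(v) + ∏_{j ≠ i} qⱼ ≤ B'(v) + B'(w)` and the right side by `B'(v + w - t)`, where
`v = a - 1 - (a - 1) / k`, `w = n - a` and `t = (n - 1) / k - (a - 1) / k`. The near
superadditivity `B'(v) + B'(w) ≤ B'(v + w - t)` holds for `t ≤ min v w` and `t < k - 1`, and
`n ≤ k (k - 1)` is exactly what bounds `t`.
-/

open Finset

/-- The equitable partition of `n` into `k` parts has `n % k` parts `n / k + 1` and the others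
`n / k`. -/
def balancedProd (k n : ℕ) : ℕ :=
  (n / k + 1) ^ (n % k) * (n / k) ^ (k - n % k)

@[simp]
lemma balancedProd_zero_left (n : ℕ) : balancedProd 0 n = 1 := by
  simp [balancedProd]

lemma balancedProd_mul_add {k d r : ℕ} (hr : r ≤ k) :
    balancedProd k (k * d + r) = (d + 1) ^ r * d ^ (k - r) := by
  rcases hr.lt_or_eq with hr | rfl
  · have hk : 0 < k := by omega
    rw [balancedProd, Nat.mul_add_div hk, Nat.div_eq_of_lt hr, Nat.mul_add_mod,
      Nat.mod_eq_of_lt hr, add_zero]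
  · rcases Nat.eq_zero_or_pos r with rfl | hk
    · simp
    · rw [show r * d + r = r * (d + 1) by ring, balancedProd, Nat.mul_div_cancel_left _ hk,
        Nat.mul_mod_right]
      simp

lemma exists_eq_mul_add_of_pos {k : ℕ} (x : ℕ) (hk : 0 < k) :
    ∃ d r, r < k ∧ x = k * d + r ∧ x / k = d :=
  ⟨x / k, x % k, Nat.mod_lt x hk, (Nat.div_add_mod x k).symm, rfl⟩

/-- Split off a smallest part, `x / (k + 1)`. -/
lemma balancedProd_succ_left (k x : ℕ) :
    balancedProd (k + 1) x = x / (k + 1) * balancedProd k (x - x / (k + 1)) := by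
  obtain ⟨d, r, hr, rfl, hd⟩ := exists_eq_mul_add_of_pos x k.succ_pos
  rw [hd, show (k + 1) * d + r - d = k * d + r by ring_nf; omega,
    balancedProd_mul_add (by omega), balancedProd_mul_add (by omega),
    show k + 1 - r = (k - r) + 1 by omega]
  ring

/-- Split off a largest part, `x / (k + 1) + 1`. -/
lemma balancedProd_succ_left_add_one (k x : ℕ) :
    balancedProd (k + 1) (x + 1) = (x / (k + 1) + 1) * balancedProd k (x - x / (k + 1)) := by
  obtain ⟨d, r, hr, rfl, hd⟩ := exists_eq_mul_add_of_pos x k.succ_pos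
  rw [hd, show (k + 1) * d + r - d = k * d + r by ring_nf; omega, add_assoc,
    balancedProd_mul_add (by omega), balancedProd_mul_add (by omega),
    show k + 1 - (r + 1) = k - r by omega]
  ring

lemma balancedProd_succ_left_add_one_eq_add (k x : ℕ) :
    balancedProd (k + 1) (x + 1) =
      balancedProd (k + 1) x + balancedProd k (x - x / (k + 1)) := by
  rw [balancedProd_succ_left_add_one, balancedProd_succ_left]
  ring

lemma balancedProd_eq_zero_of_lt {k n : ℕ} (h : n < k) : balancedProd k n = 0 := by
  obtain ⟨k, rfl⟩ : ∃ k', k = k' + 1 := ⟨k - 1, by omega⟩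
  rw [balancedProd_succ_left, Nat.div_eq_of_lt h, zero_mul]

lemma balancedProd_pos {k n : ℕ} (hk : 0 < k) (h : k ≤ n) : 0 < balancedProd k n := by
  have : 0 < n / k := Nat.div_pos h hk
  unfold balancedProd
  positivity

lemma balancedProd_mono (k : ℕ) : Monotone (balancedProd k) := by
  refine monotone_nat_of_le_succ fun x => ?_
  cases k with
  | zero => simp
  | succ k => rw [balancedProd_succ_left_add_one_eq_add]; omega

lemma monotone_sub_div (m : ℕ) : Monotone fun x : ℕ => x - x / m := by
  refine monotone_nat_of_le_succ fun x => ?_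
  have h₁ : x / m ≤ (x + 1) / m := Nat.div_le_div_right x.le_succ
  have h₂ : (x + 1) / m ≤ x / m + 1 := by
    rw [Nat.succ_div]; split_ifs <;> omega
  have h₃ : (x + 1) / m ≤ x + 1 := Nat.div_le_self _ _
  omega

lemma mul_balancedProd_add_one_le {k v y : ℕ} (hv : v * k ≤ y) :
    v * balancedProd k (y + 1) ≤ (v + 1) * balancedProd k y := by
  cases k with
  | zero => simp
  | succ k =>
    have hvy : v ≤ y / (k + 1) := (Nat.le_div_iff_mul_le k.succ_pos).2 hv
    rw [balancedProd_succ_left_add_one, balancedProd_succ_left, ← mul_assoc, ← mul_assoc]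
    exact Nat.mul_le_mul_right _ (by nlinarith)

/-- `v ↦ v * balancedProd k (c - v)` increases up to `v = c / (k + 1)`, where it equals
`balancedProd (k + 1) c`. -/
lemma mul_balancedProd_sub_le {k v c : ℕ} (hv : v * (k + 1) ≤ c) :
    v * balancedProd k (c - v) ≤ balancedProd (k + 1) c := by
  have hv' : v ≤ c / (k + 1) := (Nat.le_div_iff_mul_le k.succ_pos).2 hv
  induction hv' using Nat.decreasingInduction with
  | self => rw [balancedProd_succ_left]
  | of_succ v hlt ih =>
    have hv₁ : (v + 1) * (k + 1) ≤ c := (Nat.le_div_iff_mul_le k.succ_pos).1 hlt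
    have hvc : v * k + (v + 1) ≤ c := by nlinarith
    calc v * balancedProd k (c - v)
        = v * balancedProd k (c - (v + 1) + 1) := by rw [show c - (v + 1) + 1 = c - v by omega]
      _ ≤ (v + 1) * balancedProd k (c - (v + 1)) := mul_balancedProd_add_one_le (by omega)
      _ ≤ balancedProd (k + 1) c := ih hv₁

/-- Split off a smallest part and induct on the number of parts. -/
lemma prod_le_balancedProd {ι : Type*} [DecidableEq ι] (s : Finset ι) (q : ι → ℕ) :
    ∏ i ∈ s, q i ≤ balancedProd #s (∑ i ∈ s, q i) := by
  induction hs : #s generalizing s with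
  | zero => simp_all
  | succ k ih =>
    obtain ⟨i, hi, hmin⟩ := s.exists_min_image q (card_pos.1 (by omega))
    have hcard : #(s.erase i) = k := by rw [card_erase_of_mem hi, hs]; rfl
    have hsmall : q i * (k + 1) ≤ ∑ j ∈ s, q j := by
      simpa [hs, mul_comm] using s.card_nsmul_le_sum q (q i) hmin
    rw [← mul_prod_erase s q hi, ← add_sum_erase s q hi]
    calc q i * ∏ j ∈ s.erase i, q j
        ≤ q i * balancedProd k (∑ j ∈ s.erase i, q j) := by
          gcongr; simpa [hcard] using ih (s.erase i) hcard
      _ = q i * balancedProd k (q i + ∑ j ∈ s.erase i, q j - q i) := by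
          rw [Nat.add_sub_cancel_left]
      _ ≤ balancedProd (k + 1) (q i + ∑ j ∈ s.erase i, q j) :=
          mul_balancedProd_sub_le (by rwa [add_sum_erase s q hi])

lemma exists_prod_eq_balancedProd (k n : ℕ) :
    ∃ q : Fin (k + 1) → ℕ, ∑ i, q i = n ∧ ∏ i, q i = balancedProd (k + 1) n := by
  induction k generalizing n with
  | zero => exact ⟨fun _ => n, by simp, by simp [balancedProd, Nat.mod_one]⟩
  | succ k ih =>
    obtain ⟨q, hsum, hprod⟩ := ih (n - n / (k + 2))
    refine ⟨Fin.cons (n / (k + 2)) q, ?_, ?_⟩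
    · rw [Fin.sum_cons, hsum]
      have := Nat.div_le_self n (k + 2)
      omega
    · rw [Fin.prod_cons, hprod, balancedProd_succ_left (k + 1) n]

lemma lt_sum_of_prod_ne_zero {ι : Type*} [Fintype ι] [Nontrivial ι] {q : ι → ℕ}
    (h : ∏ i, q i ≠ 0) (i : ι) : q i < ∑ j, q j := by
  classical
  obtain ⟨j, hji⟩ := exists_ne i
  have hj : q j ≠ 0 := prod_ne_zero_iff.1 h j (mem_univ j)
  have : q i + q j ≤ ∑ j, q j := by
    rw [← sum_pair hji.symm]
    exact sum_le_sum_of_subset (subset_univ _)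
  omega

lemma exists_balanced_partition {k n : ℕ} (hk : 2 ≤ k) (hn : k ≤ n) :
    ∃ q : Fin k → ℕ, ∑ i, q i = n ∧ (∀ i, q i < n) ∧ ∏ i, q i = balancedProd k n := by
  obtain ⟨k, rfl⟩ : ∃ k', k = k' + 2 := ⟨k - 2, by omega⟩
  obtain ⟨q, hsum, hprod⟩ := exists_prod_eq_balancedProd (k + 1) n
  have hpos : ∏ i, q i ≠ 0 := by rw [hprod]; exact (balancedProd_pos (by omega) hn).ne'
  exact ⟨q, hsum, fun i => hsum ▸ lt_sum_of_prod_ne_zero hpos i, hprod⟩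

lemma balancedProd_add_mul_le (k x s : ℕ) :
    balancedProd (k + 1) x + s * balancedProd k (x - x / (k + 1)) ≤
      balancedProd (k + 1) (x + s) := by
  induction s with
  | zero => simp
  | succ s ih =>
    have hmono :
        balancedProd k (x - x / (k + 1)) ≤ balancedProd k (x + s - (x + s) / (k + 1)) :=
      balancedProd_mono k (monotone_sub_div (k + 1) (Nat.le_add_right x s))
    rw [← add_assoc, balancedProd_succ_left_add_one_eq_add]
    linarith

/-- `balancedProd (k + 1) m` is absorbed by the `m - t` increments of `balancedProd (k + 1)` after
`M`, each at least `balancedProd k (M - M / (k + 1))`. -/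
lemma balancedProd_add_balancedProd_le_of_le {k t m M : ℕ} (hmM : m ≤ M) (htm : t ≤ m)
    (htk : t ≤ k) : balancedProd (k + 1) M + balancedProd (k + 1) m ≤
      balancedProd (k + 1) (M + m - t) := by
  rcases Nat.lt_or_ge m (k + 1) with hm | hm
  · rw [balancedProd_eq_zero_of_lt hm, add_zero]
    exact balancedProd_mono _ (by omega)
  · have hdiv : m / (k + 1) + t ≤ m := by
      obtain ⟨e, rfl⟩ : ∃ e, m = k + 1 + e := ⟨m - (k + 1), by omega⟩
      have : (k + 1 + e) / (k + 1) ≤ e + 1 := Nat.div_le_of_le_mul (by nlinarith)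
      omega
    calc balancedProd (k + 1) M + balancedProd (k + 1) m
        = balancedProd (k + 1) M + m / (k + 1) * balancedProd k (m - m / (k + 1)) := by
          rw [← balancedProd_succ_left]
      _ ≤ balancedProd (k + 1) M + (m - t) * balancedProd k (M - M / (k + 1)) := by
          gcongr
          · omega
          · exact balancedProd_mono k (monotone_sub_div (k + 1) hmM)
      _ ≤ balancedProd (k + 1) (M + (m - t)) := balancedProd_add_mul_le k M (m - t)
      _ = balancedProd (k + 1) (M + m - t) := by rw [Nat.add_sub_assoc htm]

lemma balancedProd_add_balancedProd_le {k t v w : ℕ} (htv : t ≤ v) (htw : t ≤ w)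
    (htk : t ≤ k) : balancedProd (k + 1) v + balancedProd (k + 1) w ≤
      balancedProd (k + 1) (v + w - t) := by
  rcases le_total w v with h | h
  · exact balancedProd_add_balancedProd_le_of_le h htw htk
  · rw [add_comm v, add_comm (balancedProd _ v)]
    exact balancedProd_add_balancedProd_le_of_le h htv htk

/-- The first summand is the increment of `balancedProd (k + 1)` at a largest part `a + 1` of a
partition of `n + 1`, the second bounds the product of the other parts, and the right side is the
increment at `n + 1`. -/
lemma balancedProd_sub_div_add_balancedProd_sub_le {k a n : ℕ} (hka : k ≤ a) (han : a ≤ n)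
    (hn : n < (k + 1) * k) : balancedProd k (a - a / (k + 1)) + balancedProd k (n - a) ≤
      balancedProd k (n - n / (k + 1)) := by
  obtain ⟨j, rfl⟩ : ∃ j, k = j + 1 := ⟨k - 1, by rcases k with _ | k <;> simp_all⟩
  have hn_div : n / (j + 1 + 1) < j + 1 :=
    (Nat.div_lt_iff_lt_mul (by omega)).2 (by linarith)
  have ha_div : a / (j + 1 + 1) ≤ n / (j + 1 + 1) := Nat.div_le_div_right han
  have hsub : a - a / (j + 1 + 1) ≤ n - n / (j + 1 + 1) := monotone_sub_div (j + 1 + 1) han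
  have ha_le : a / (j + 1 + 1) ≤ a := Nat.div_le_self a _
  have hn_le : n / (j + 1 + 1) ≤ n := Nat.div_le_self n _
  refine (balancedProd_add_balancedProd_le (k := j) (t := n / (j + 1 + 1) - a / (j + 1 + 1))
    ?_ ?_ ?_).trans_eq (congrArg _ ?_) <;>
  generalize a / (j + 1 + 1) = da at * <;> generalize n / (j + 1 + 1) = dn at * <;> omega

lemma sum_balancedProd_add_prod_le {k n : ℕ} (hn : n ≤ (k + 1) * k) (q : Fin (k + 1) → ℕ)
    (hq : ∀ i, q i < n) (hsum : ∑ i, q i = n) :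
    ∑ i, balancedProd (k + 1) (q i) + ∏ i, q i ≤ balancedProd (k + 1) n := by
  induction n generalizing q with
  | zero => exact absurd (hq 0) (Nat.not_lt_zero _)
  | succ n ih =>
    by_cases hsmall : ∀ i, q i < k + 1
    · rw [sum_eq_zero fun i _ => balancedProd_eq_zero_of_lt (hsmall i), zero_add, ← hsum]
      simpa using prod_le_balancedProd univ q
    obtain ⟨i, hi⟩ : ∃ i, k + 1 ≤ q i := by simpa using hsmall
    obtain ⟨i₀, -, hmax⟩ := univ.exists_max_image q univ_nonempty
    obtain ⟨a, ha⟩ : ∃ a, q i₀ = a + 1 := ⟨q i₀ - 1, by have := hmax i (mem_univ i); omega⟩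
    have hka : k ≤ a := by have := hmax i (mem_univ i); omega
    have han : a < n := by have := hq i₀; omega
    rw [sum_eq_add_sum_sdiff_singleton_of_mem (mem_univ i₀), ha] at hsum
    set rest := univ \ {i₀}
    have hrest : ∑ i ∈ rest, q i = n - a := by omega
    have hprod_rest : ∏ i ∈ rest, q i ≤ balancedProd k (n - a) := by
      simpa [rest, hrest, card_sdiff] using prod_le_balancedProd rest q
    set q' := Function.update q i₀ a
    have hq' : ∀ i, q' i < n := by
      intro i
      rcases eq_or_ne i i₀ with rfl | hi
      · simpa only [q', Function.update_self]
      · have : q i ≤ n - a := hrest ▸ single_le_sum (fun _ _ => Nat.zero_le _)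
          (mem_sdiff.2 ⟨mem_univ i, by simpa using hi⟩)
        simp only [q', Function.update_of_ne hi]; omega
    have ih' := ih (by linarith) q' hq' <| by
      rw [sum_update_of_mem (mem_univ i₀), hrest]; omega
    rw [← Function.comp_def (balancedProd (k + 1)), Function.comp_update,
      sum_update_of_mem (mem_univ i₀), prod_update_of_mem (mem_univ i₀)] at ih'
    rw [sum_eq_add_sum_sdiff_singleton_of_mem (mem_univ i₀),
      prod_eq_mul_prod_sdiff_singleton_of_mem (mem_univ i₀), ha,
      balancedProd_succ_left_add_one_eq_add, balancedProd_succ_left_add_one_eq_add]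
    have key := balancedProd_sub_div_add_balancedProd_sub_le (n := n) hka han.le (by linarith)
    simp only [Function.comp_apply] at ih'
    rw [add_one_mul]
    linarith

lemma g_eq (k s : ℕ) : g k s = if s < k then 0
    else sSup {m | ∃ q : Fin k → ℕ, ∃ _ : ∀ i, q i < s,
      (∑ i, q i) = s ∧ m = (∑ i, g k (q i)) + ∏ i, q i} :=
  Nat.strongRecOn_eq _ s

lemma p_eq_balancedProd {k n : ℕ} (hk : 2 ≤ k) (hn : k ≤ n) : p n k = balancedProd k n := by
  obtain ⟨q, hsum, hlt, hprod⟩ := exists_balanced_partition hk hn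
  refine IsGreatest.csSup_eq ⟨⟨q, hsum, hlt, hprod.symm⟩, ?_⟩
  rintro m ⟨q, rfl, -, rfl⟩
  simpa using prod_le_balancedProd univ q

lemma g_eq_balancedProd {k n : ℕ} (hk : 2 ≤ k) (hn : n ≤ k * (k - 1)) :
    g k n = balancedProd k n := by
  induction n using Nat.strong_induction_on with
  | _ n ih =>
  rw [g_eq]
  split_ifs with hnk
  · exact (balancedProd_eq_zero_of_lt hnk).symm
  obtain ⟨k, rfl⟩ : ∃ k', k = k' + 1 := ⟨k - 1, by omega⟩
  set S := {m | ∃ q : Fin (k + 1) → ℕ, ∃ _ : ∀ i, q i < n,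
    (∑ i, q i) = n ∧ m = (∑ i, g (k + 1) (q i)) + ∏ i, q i}
  have hbound : ∀ m ∈ S, m ≤ balancedProd (k + 1) n := by
    rintro m ⟨q, hlt, hsum, rfl⟩
    rw [sum_congr rfl fun i _ => ih (q i) (hlt i) ((hlt i).le.trans hn)]
    exact sum_balancedProd_add_prod_le hn q hlt hsum
  obtain ⟨q, hsum, hlt, hprod⟩ := exists_balanced_partition hk (not_lt.1 hnk)
  have hmem : (∑ i, g (k + 1) (q i)) + ∏ i, q i ∈ S := ⟨q, hlt, hsum, rfl⟩
  refine le_antisymm (csSup_le ⟨_, hmem⟩ hbound) ?_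
  calc balancedProd (k + 1) n ≤ (∑ i, g (k + 1) (q i)) + ∏ i, q i := by omega
    _ ≤ sSup S := le_csSup ⟨_, hbound⟩ hmem

theorem g_eq_p_small (k n : ℕ) (hk : 3 ≤ k) (hn : k ≤ n) (hn' : n ≤ k * (k - 1)) :
    g k n = p n k := by
  rw [g_eq_balancedProd (by omega) hn', p_eq_balancedProd (by omega) hn]
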